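/- Let f be a real number with 0 < f < 1/3, set b = (1+f)/2, and let π : ℝ → ℝ be the rlm_dpl1_extreme_3a function. Then for all x, y ∈ ℝ with b < x < 1, b < y < 1, and 1 + f < x + y < 1 + b, the additivity relation π(x) + π(y) = π(x+y) holds. -/

import Mathlib

/-- The `rlm_dpl1_extreme_3a` function, periodic with period 1, defined via the
fractional part. -/
noncomputable def rlmDpl1Extreme3a (f : ℝ) : ℝ → ℝ := fun x =>
  let t := Int.fract x
  if t ≤ f then t / f
  else if t < (1 + f) / 2 then 2 * t / (1 + 2 * f)
  else if t = (1 + f) / 2 then 1 / 2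
  else (2 * t - 1) / (1 + 2 * f)

theorem rlmDpl1Extreme3a_periodic (f : ℝ) : Function.Periodic (rlmDpl1Extreme3a f) 1 := by
  intro x
  simp only [rlmDpl1Extreme3a, Int.fract_add_one]

theorem rlmDpl1Extreme3a_of_lt_of_lt {f t : ℝ} (ht0 : 0 ≤ t) (hft : f < t) (htb : t < (1 + f) / 2) :
    rlmDpl1Extreme3a f t = 2 * t / (1 + 2 * f) := by
  have hfract : Int.fract t = t := Int.fract_eq_self.2 ⟨ht0, by linarith⟩
  simp only [rlmDpl1Extreme3a, hfract, if_neg hft.not_ge, if_pos htb]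

theorem rlmDpl1Extreme3a_of_lt_of_lt_one {f t : ℝ} (ht0 : 0 ≤ t) (hbt : (1 + f) / 2 < t)
    (ht1 : t < 1) : rlmDpl1Extreme3a f t = (2 * t - 1) / (1 + 2 * f) := by
  have hfract : Int.fract t = t := Int.fract_eq_self.2 ⟨ht0, ht1⟩
  simp only [rlmDpl1Extreme3a, hfract, if_neg (show ¬t ≤ f by linarith), if_neg hbt.not_gt,
    if_neg hbt.ne']

theorem rlmDpl1Extreme3a_additive_F2_general (f : ℝ) (hf0 : 0 < f)
    (b : ℝ) (hb : b = (1 + f) / 2)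
    (x y : ℝ) (hxb : b < x) (hx1 : x < 1) (hyb : b < y) (hy1 : y < 1)
    (hxyl : 1 + f < x + y) (hxyu : x + y < 1 + b) :
    rlmDpl1Extreme3a f x + rlmDpl1Extreme3a f y = rlmDpl1Extreme3a f (x + y) := by
  subst hb
  -- x and y lie on the last piece, x + y - 1 on the middle one; both pieces have slope 2 / (1 + 2f).
  rw [← (rlmDpl1Extreme3a_periodic f).sub_eq (x + y),
    rlmDpl1Extreme3a_of_lt_of_lt_one (by linarith) hxb hx1,
    rlmDpl1Extreme3a_of_lt_of_lt_one (by linarith) hyb hy1,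
    rlmDpl1Extreme3a_of_lt_of_lt (by linarith) (by linarith) (by linarith)]
  ring

theorem rlmDpl1Extreme3a_additive_F2 (f : ℝ) (hf0 : 0 < f) (hf : f < 1 / 3)
    (b : ℝ) (hb : b = (1 + f) / 2)
    (x y : ℝ) (hxb : b < x) (hx1 : x < 1) (hyb : b < y) (hy1 : y < 1)
    (hxyl : 1 + f < x + y) (hxyu : x + y < 1 + b) :
    rlmDpl1Extreme3a f x + rlmDpl1Extreme3a f y = rlmDpl1Extreme3a f (x + y) :=
  rlmDpl1Extreme3a_additive_F2_general f hf0 b hb x y hxb hx1 hyb hy1 hxyl hxyu
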